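/- For the Leibniz algebra M₁(k) with 2k-2 ≥ n, the linear map h₂ defined by h₂(y₁) = yₙ, h₂(yᵢ) = (i-1)·y_{k+i-2} for 2 ≤ i ≤ n-k+1, and h₂(yᵢ) = 0 otherwise, is a derivation of M₁(k). -/

import Mathlib

/-!
The Leibniz rule is bilinear in its two arguments, so it suffices to check it on pairs of basis
vectors `y_i, y_j`. There the key point is that `h₂` takes values in `span {y_m | m ≥ k}`, and
the condition `2k - 2 ≥ n` makes this span both killed by `h₂` and by right multiplication with
every `y_j`, `j ≠ 1`. Hence for `j ≠ 1` all three terms vanish, while for `j = 1` the rule reduces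
to `i • y_{k+i-1} = (i - 1) • y_{k+i-1} + y_{k+i-1}`.
-/

theorem LinearMap.leibniz_of_span_eq_top {R M : Type*} [CommSemiring R] [AddCommMonoid M]
    [Module R M] {s : Set M} (hs : Submodule.span R s = ⊤) (B : M →ₗ[R] M →ₗ[R] M)
    (D : M →ₗ[R] M) (h : ∀ x ∈ s, ∀ z ∈ s, D (B x z) = B (D x) z + B x (D z)) (x z : M) :
    D (B x z) = B (D x) z + B x (D z) := by
  have hB : B.compr₂ D = B ∘ₗ D + B.compl₂ D :=
    LinearMap.ext_on hs fun x hx => LinearMap.ext_on hs fun z hz => by simpa using h x hx z hz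
  simpa using LinearMap.congr_fun₂ hB x z

section M1k

variable {R V : Type*} [CommRing R] [AddCommGroup V] [Module R V] {n k : ℕ} {y : ℕ → V}

structure IsM1kProduct (n k : ℕ) (y : ℕ → V) (B : V →ₗ[R] V →ₗ[R] V) : Prop where
  apply_y_one : ∀ i, 1 ≤ i → i ≤ n - 2 → B (y i) (y 1) = y (i + 1)
  apply_y_last : ∀ i, 1 ≤ i → i ≤ n - k → B (y i) (y n) = y (k + i - 1)
  apply_y_eq_zero : ∀ i j, 1 ≤ i → i ≤ n → 1 ≤ j → j ≤ n →
    ¬(j = 1 ∧ i ≤ n - 2) → ¬(j = n ∧ i ≤ n - k) → B (y i) (y j) = 0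

structure IsM1kH2 (n k : ℕ) (y : ℕ → V) (H : V →ₗ[R] V) : Prop where
  apply_y_one : H (y 1) = y n
  apply_y : ∀ i, 2 ≤ i → i ≤ n - k + 1 → H (y i) = ((i : R) - 1) • y (k + i - 2)
  apply_y_eq_zero : ∀ i, 1 ≤ i → i ≤ n → i ≠ 1 → ¬(2 ≤ i ∧ i ≤ n - k + 1) → H (y i) = 0

variable {B : V →ₗ[R] V →ₗ[R] V} {H : V →ₗ[R] V}

theorem IsM1kProduct.apply_y_eq_zero_of_le (hB : IsM1kProduct n k y B) (hk2 : n ≤ 2 * k - 2)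
    {m j : ℕ} (hkm : k ≤ m) (hmn : m ≤ n) (hj1 : 1 ≤ j) (hjn : j ≤ n) (hj : j ≠ 1) :
    B (y m) (y j) = 0 :=
  hB.apply_y_eq_zero m j (by omega) hmn hj1 hjn (by omega) (by omega)

theorem IsM1kH2.apply_y_eq_zero_of_le (hH : IsM1kH2 n k y H) (hk3 : 3 ≤ k)
    (hk2 : n ≤ 2 * k - 2) {m : ℕ} (hkm : k ≤ m) (hmn : m ≤ n) : H (y m) = 0 :=
  hH.apply_y_eq_zero m (by omega) hmn (by omega) (by omega)

theorem IsM1kH2.apply_product_eq_zero (hH : IsM1kH2 n k y H) (hB : IsM1kProduct n k y B)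
    (hk3 : 3 ≤ k) (hk2 : n ≤ 2 * k - 2) {i j : ℕ} (hi1 : 1 ≤ i) (hin : i ≤ n) (hj1 : 1 ≤ j)
    (hjn : j ≤ n) (hj : j ≠ 1) : H (B (y i) (y j)) = 0 := by
  by_cases hlast : j = n ∧ i ≤ n - k
  · obtain ⟨rfl, hik⟩ := hlast
    rw [hB.apply_y_last i hi1 hik]
    exact hH.apply_y_eq_zero_of_le hk3 hk2 (by omega) (by omega)
  · rw [hB.apply_y_eq_zero i j hi1 hin hj1 hjn (by omega) hlast, map_zero]

theorem IsM1kH2.product_apply_left_eq_zero (hH : IsM1kH2 n k y H) (hB : IsM1kProduct n k y B)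
    (hkn : k ≤ n - 1) (hk2 : n ≤ 2 * k - 2) {i j : ℕ} (hi1 : 1 ≤ i) (hin : i ≤ n)
    (hj1 : 1 ≤ j) (hjn : j ≤ n) (hj : j ≠ 1) : B (H (y i)) (y j) = 0 := by
  by_cases hi : i = 1
  · rw [hi, hH.apply_y_one]
    exact hB.apply_y_eq_zero_of_le hk2 (by omega) le_rfl hj1 hjn hj
  by_cases hmid : 2 ≤ i ∧ i ≤ n - k + 1
  · rw [hH.apply_y i hmid.1 hmid.2, map_smul, LinearMap.smul_apply,
      hB.apply_y_eq_zero_of_le hk2 (by omega) (by omega) hj1 hjn hj, smul_zero]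
  · rw [hH.apply_y_eq_zero i hi1 hin hi hmid, map_zero, LinearMap.zero_apply]

theorem IsM1kH2.product_apply_right_eq_zero (hH : IsM1kH2 n k y H) (hB : IsM1kProduct n k y B)
    (hk3 : 3 ≤ k) {i j : ℕ} (hi1 : 1 ≤ i) (hin : i ≤ n) (hj1 : 1 ≤ j) (hjn : j ≤ n)
    (hj : j ≠ 1) : B (y i) (H (y j)) = 0 := by
  by_cases hmid : 2 ≤ j ∧ j ≤ n - k + 1
  · rw [hH.apply_y j hmid.1 hmid.2, map_smul,
      hB.apply_y_eq_zero i (k + j - 2) hi1 hin (by omega) (by omega) (by omega) (by omega),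
      smul_zero]
  · rw [hH.apply_y_eq_zero j hj1 hjn hj hmid, map_zero]

theorem IsM1kH2.leibniz_y_one (hH : IsM1kH2 n k y H) (hB : IsM1kProduct n k y B)
    (hk3 : 3 ≤ k) (hkn : k ≤ n - 1) (hk2 : n ≤ 2 * k - 2) {i : ℕ} (hi1 : 1 ≤ i) (hin : i ≤ n) :
    H (B (y i) (y 1)) = B (H (y i)) (y 1) + B (y i) (H (y 1)) := by
  rw [hH.apply_y_one]
  by_cases hi : i = 1
  · subst hi
    rw [hB.apply_y_one 1 le_rfl (by omega), hH.apply_y 2 le_rfl (by omega), hH.apply_y_one,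
      hB.apply_y_eq_zero n 1 (by omega) le_rfl le_rfl (by omega) (by omega) (by omega),
      hB.apply_y_last 1 le_rfl (by omega), show k + 2 - 2 = k + 1 - 1 by omega]
    push_cast
    module
  by_cases hik : i ≤ n - k
  · rw [hB.apply_y_one i hi1 (by omega), hH.apply_y (i + 1) (by omega) (by omega),
      hH.apply_y i (by omega) (by omega), map_smul, LinearMap.smul_apply,
      hB.apply_y_one (k + i - 2) (by omega) (by omega), hB.apply_y_last i hi1 hik,
      show k + (i + 1) - 2 = k + i - 1 by omega, show k + i - 2 + 1 = k + i - 1 by omega]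
    push_cast
    module
  -- Here `y_{i+1}` and `y_{k+i-2}` (when `i = n - k + 1`) lie past the range where `h₂` and `· y₁` act.
  have hleft : H (B (y i) (y 1)) = 0 := by
    by_cases hi2 : i ≤ n - 2
    · rw [hB.apply_y_one i hi1 hi2,
        hH.apply_y_eq_zero (i + 1) (by omega) (by omega) (by omega) (by omega)]
    · rw [hB.apply_y_eq_zero i 1 hi1 hin le_rfl (by omega) (by omega) (by omega), map_zero]
  have hright : B (H (y i)) (y 1) = 0 := by
    by_cases hmid : i ≤ n - k + 1
    · rw [hH.apply_y i (by omega) hmid, map_smul, LinearMap.smul_apply,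
        hB.apply_y_eq_zero (k + i - 2) 1 (by omega) (by omega) le_rfl (by omega) (by omega)
          (by omega), smul_zero]
    · rw [hH.apply_y_eq_zero i hi1 hin hi (by omega), map_zero, LinearMap.zero_apply]
  rw [hleft, hright, hB.apply_y_eq_zero i n hi1 hin (by omega) le_rfl (by omega) (by omega),
    zero_add]

theorem IsM1kH2.leibniz_y (hH : IsM1kH2 n k y H) (hB : IsM1kProduct n k y B)
    (hk3 : 3 ≤ k) (hkn : k ≤ n - 1) (hk2 : n ≤ 2 * k - 2) {i j : ℕ} (hi1 : 1 ≤ i) (hin : i ≤ n)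
    (hj1 : 1 ≤ j) (hjn : j ≤ n) :
    H (B (y i) (y j)) = B (H (y i)) (y j) + B (y i) (H (y j)) := by
  obtain rfl | hj := eq_or_ne j 1
  · exact hH.leibniz_y_one hB hk3 hkn hk2 hi1 hin
  rw [hH.apply_product_eq_zero hB hk3 hk2 hi1 hin hj1 hjn hj,
    hH.product_apply_left_eq_zero hB hkn hk2 hi1 hin hj1 hjn hj,
    hH.product_apply_right_eq_zero hB hk3 hi1 hin hj1 hjn hj, add_zero]

end M1k

theorem M1k_h2_is_derivation_general
    (n k : ℕ) (hk3 : 3 ≤ k) (hkn : k ≤ n - 1) (hk2 : n ≤ 2 * k - 2)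
    (V : Type*) [AddCommGroup V] [Module ℂ V]
    (y : ℕ → V)
    (hspan : Submodule.span ℂ (Set.range (fun i : Fin n => y (i.val + 1))) = ⊤)
    (B : V →ₗ[ℂ] V →ₗ[ℂ] V)
    (h1 : ∀ i, 1 ≤ i → i ≤ n - 2 → B (y i) (y 1) = y (i + 1))
    (h2 : ∀ i, 1 ≤ i → i ≤ n - k → B (y i) (y n) = y (k + i - 1))
    (h0 : ∀ i j, 1 ≤ i → i ≤ n → 1 ≤ j → j ≤ n →
      ¬(j = 1 ∧ i ≤ n - 2) → ¬(j = n ∧ i ≤ n - k) → B (y i) (y j) = 0)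
    (H2 : V →ₗ[ℂ] V)
    (hH1 : H2 (y 1) = y n)
    (hHi : ∀ i, 2 ≤ i → i ≤ n - k + 1 → H2 (y i) = ((i : ℂ) - 1) • y (k + i - 2))
    (hHz : ∀ i, 1 ≤ i → i ≤ n → i ≠ 1 → ¬(2 ≤ i ∧ i ≤ n - k + 1) → H2 (y i) = 0) :
    ∀ x z : V, H2 (B x z) = B (H2 x) z + B x (H2 z) := by
  have hB : IsM1kProduct n k y B := ⟨h1, h2, h0⟩
  have hH : IsM1kH2 n k y H2 := ⟨hH1, hHi, hHz⟩
  refine LinearMap.leibniz_of_span_eq_top hspan B H2 ?_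
  rintro _ ⟨i, rfl⟩ _ ⟨j, rfl⟩
  exact hH.leibniz_y hB hk3 hkn hk2 (by omega) (by omega) (by omega) (by omega)

/-- For M₁(k) with 2k-2 ≥ n, the map h₂ with h₂(y₁) = yₙ,
h₂(yᵢ) = (i-1)·y_{k+i-2} for 2 ≤ i ≤ n-k+1, h₂(yᵢ) = 0 otherwise,
is a derivation. -/
theorem M1k_h2_is_derivation
    (n k : ℕ) (hn : 4 ≤ n) (hk3 : 3 ≤ k) (hkn : k ≤ n - 1) (hk2 : n ≤ 2 * k - 2)
    (V : Type*) [AddCommGroup V] [Module ℂ V]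
    (y : ℕ → V)
    (hindep : LinearIndependent ℂ (fun i : Fin n => y (i.val + 1)))
    (hspan : Submodule.span ℂ (Set.range (fun i : Fin n => y (i.val + 1))) = ⊤)
    (B : V →ₗ[ℂ] V →ₗ[ℂ] V)
    (h1 : ∀ i, 1 ≤ i → i ≤ n - 2 → B (y i) (y 1) = y (i + 1))
    (h2 : ∀ i, 1 ≤ i → i ≤ n - k → B (y i) (y n) = y (k + i - 1))
    (h0 : ∀ i j, 1 ≤ i → i ≤ n → 1 ≤ j → j ≤ n →
      ¬(j = 1 ∧ i ≤ n - 2) → ¬(j = n ∧ i ≤ n - k) → B (y i) (y j) = 0)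
    (H2 : V →ₗ[ℂ] V)
    (hH1 : H2 (y 1) = y n)
    (hHi : ∀ i, 2 ≤ i → i ≤ n - k + 1 → H2 (y i) = ((i : ℂ) - 1) • y (k + i - 2))
    (hHz : ∀ i, 1 ≤ i → i ≤ n → i ≠ 1 → ¬(2 ≤ i ∧ i ≤ n - k + 1) → H2 (y i) = 0) :
    ∀ x z : V, H2 (B x z) = B (H2 x) z + B x (H2 z) :=
  M1k_h2_is_derivation_general n k hk3 hkn hk2 V y hspan B h1 h2 h0 H2 hH1 hHi hHz
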